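/- arXiv:1805.01291 — 2 statements merged into one kernel-verified Lean document; each statement's English description precedes it below -/
import Mathlib

section
/- Let $p \ge 2$, $d \in \{0,\dots,9\}$, and define $P_{(d,n,p)}$ as the probability that the second-stage draw has $p$-th digit $d$ in the two-stage uniform model bounded by $n$. Then for all $n \ge 10^{p-1}+9$ and all $a, b \in \{0,\dots,9\}$ with $a < b$, one has $P_{(a,n,p)} > P_{(b,n,p)}$. -/
/-!
Lowering the `p`-th digit of `j` by `b - a` (subtracting `(b - a)` times its place value) keeps the
number of digits, since `p ≥ 2` means the leading digit is untouched; it is therefore an injection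
from the numbers in `[10^(p-1), i]` with `p`-th digit `b` into those with `p`-th digit `a`. So
`c_b(i) ≤ c_a(i)` for every `i`, and at `i = 10^(p-1) + a` the inequality is strict (`0 < 1`).
Averaging with positive weights gives `P_(b,n,p) < P_(a,n,p)`.
-/

open Finset Real Filter

noncomputable section

/-- The `p`-th digit (from the left) of `j` in base 10. -/
def pthDigit (p j : ℕ) : ℕ := j / 10 ^ (Nat.log 10 j + 1 - p) % 10

/-- Number of integers `j` with `10^(p-1) ≤ j ≤ n` whose `p`-th digit is `d`. -/
def digitCount (p d n : ℕ) : ℕ :=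
  ((Finset.Icc (10 ^ (p - 1)) n).filter (fun j => pthDigit p j = d)).card

/-- The two-stage uniform model probability `P_{(d,n,p)}`. -/
def Pdig (p d n : ℕ) : ℝ :=
  (1 / ((n : ℝ) + 1 - 10 ^ (p - 1))) *
    ∑ i ∈ Finset.Icc (10 ^ (p - 1)) n, (digitCount p d i : ℝ) / ((i : ℝ) + 1 - 10 ^ (p - 1))

def placeValue (p j : ℕ) : ℕ := 10 ^ (Nat.log 10 j + 1 - p)

def lowerPthDigit (p c j : ℕ) : ℕ := j - c * placeValue p j

lemma pow_sub_one_eq_ten_mul {p : ℕ} (hp : 2 ≤ p) : 10 ^ (p - 1) = 10 * 10 ^ (p - 2) := by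
  rw [← pow_succ']; congr 1; omega

lemma placeValue_pos (p j : ℕ) : 0 < placeValue p j := Nat.pow_pos (by norm_num)

lemma pthDigit_eq (p j : ℕ) : pthDigit p j = j / placeValue p j % 10 := rfl

lemma mul_placeValue_le {p c j : ℕ} (hc : c ≤ pthDigit p j) : c * placeValue p j ≤ j :=
  calc c * placeValue p j ≤ j / placeValue p j * placeValue p j :=
        Nat.mul_le_mul_right _ (hc.trans (Nat.mod_le _ _))
    _ ≤ j := Nat.div_mul_le_self _ _

lemma lowerPthDigit_div_placeValue (p c j : ℕ) :
    lowerPthDigit p c j / placeValue p j = j / placeValue p j - c := by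
  rw [lowerPthDigit, mul_comm, Nat.sub_mul_div]

lemma pow_log_le_lowerPthDigit {p c j : ℕ} (hp : 2 ≤ p) (hj : 10 ^ (p - 1) ≤ j)
    (hc : c ≤ pthDigit p j) : 10 ^ Nat.log 10 j ≤ lowerPthDigit p c j := by
  have hj0 : j ≠ 0 := (Nat.pos_of_ne_zero (by positivity)).trans_le hj |>.ne'
  have hpow : 10 ^ Nat.log 10 j = 10 ^ (p - 1) * placeValue p j := by
    rw [placeValue, ← pow_add]; congr 1; have := Nat.le_log_of_pow_le (by norm_num) hj; omega
  have hquot : 10 ^ (p - 1) ≤ j / placeValue p j := by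
    rw [Nat.le_div_iff_mul_le (placeValue_pos p j), ← hpow]; exact Nat.pow_log_le_self 10 hj0
  have hten := pow_sub_one_eq_ten_mul hp
  -- `10 ^ (p - 1)` is a multiple of 10, so lowering the last digit of `j / placeValue p j` keeps
  -- it above `10 ^ (p - 1)`
  have hlow : 10 ^ (p - 1) ≤ lowerPthDigit p c j / placeValue p j := by
    rw [lowerPthDigit_div_placeValue]; rw [pthDigit_eq] at hc; omega
  calc 10 ^ Nat.log 10 j ≤ lowerPthDigit p c j / placeValue p j * placeValue p j := by
        rw [hpow]; exact Nat.mul_le_mul_right _ hlow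
    _ ≤ lowerPthDigit p c j := Nat.div_mul_le_self _ _

lemma log_lowerPthDigit {p c j : ℕ} (hp : 2 ≤ p) (hj : 10 ^ (p - 1) ≤ j)
    (hc : c ≤ pthDigit p j) : Nat.log 10 (lowerPthDigit p c j) = Nat.log 10 j :=
  Nat.log_eq_of_pow_le_of_lt_pow (pow_log_le_lowerPthDigit hp hj hc)
    ((Nat.sub_le _ _).trans_lt (Nat.lt_pow_succ_log_self (by norm_num) j))

lemma placeValue_lowerPthDigit {p c j : ℕ} (hp : 2 ≤ p) (hj : 10 ^ (p - 1) ≤ j)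
    (hc : c ≤ pthDigit p j) : placeValue p (lowerPthDigit p c j) = placeValue p j := by
  rw [placeValue, placeValue, log_lowerPthDigit hp hj hc]

lemma pthDigit_lowerPthDigit {p c j : ℕ} (hp : 2 ≤ p) (hj : 10 ^ (p - 1) ≤ j)
    (hc : c ≤ pthDigit p j) : pthDigit p (lowerPthDigit p c j) = pthDigit p j - c := by
  rw [pthDigit_eq, placeValue_lowerPthDigit hp hj hc, lowerPthDigit_div_placeValue, pthDigit_eq]
  rw [pthDigit_eq] at hc
  generalize j / placeValue p j = m at hc ⊢
  omega

lemma pow_le_lowerPthDigit {p c j : ℕ} (hp : 2 ≤ p) (hj : 10 ^ (p - 1) ≤ j)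
    (hc : c ≤ pthDigit p j) : 10 ^ (p - 1) ≤ lowerPthDigit p c j :=
  (Nat.pow_le_pow_right (by norm_num) (Nat.le_log_of_pow_le (by norm_num) hj)).trans
    (pow_log_le_lowerPthDigit hp hj hc)

lemma digitCount_le_digitCount {p a b : ℕ} (hp : 2 ≤ p) (hab : a ≤ b) (i : ℕ) :
    digitCount p b i ≤ digitCount p a i := by
  have hc {j : ℕ} (hj : pthDigit p j = b) : b - a ≤ pthDigit p j := hj ▸ Nat.sub_le _ _
  apply card_le_card_of_injOn (lowerPthDigit p (b - a))
  · intro j hj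
    simp only [coe_filter, mem_Icc, Set.mem_ofPred_eq] at hj ⊢
    obtain ⟨⟨hjlow, hji⟩, hjb⟩ := hj
    refine ⟨⟨pow_le_lowerPthDigit hp hjlow (hc hjb), (Nat.sub_le _ _).trans hji⟩, ?_⟩
    rw [pthDigit_lowerPthDigit hp hjlow (hc hjb), hjb]
    omega
  · intro j₁ hj₁ j₂ hj₂ heq
    simp only [coe_filter, mem_Icc, Set.mem_ofPred_eq] at hj₁ hj₂
    have hE : placeValue p j₁ = placeValue p j₂ := by
      rw [← placeValue_lowerPthDigit hp hj₁.1.1 (hc hj₁.2), heq,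
        placeValue_lowerPthDigit hp hj₂.1.1 (hc hj₂.2)]
    have h₁ := mul_placeValue_le (hc hj₁.2)
    have h₂ := mul_placeValue_le (hc hj₂.2)
    simp only [lowerPthDigit] at heq
    rw [hE] at h₁ heq
    omega

lemma pthDigit_pow_add {p t : ℕ} (hp : 2 ≤ p) (ht : t < 10) :
    pthDigit p (10 ^ (p - 1) + t) = t := by
  have hten := pow_sub_one_eq_ten_mul hp
  have hlog : Nat.log 10 (10 ^ (p - 1) + t) = p - 1 := by
    refine Nat.log_eq_of_pow_le_of_lt_pow (Nat.le_add_right _ _) ?_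
    have : 0 < 10 ^ (p - 2) := by positivity
    rw [pow_succ]; omega
  rw [pthDigit, hlog, show p - 1 + 1 - p = 0 by omega, pow_zero, Nat.div_one]
  omega

lemma digitCount_pow_add_eq_zero {p d t : ℕ} (hp : 2 ≤ p) (htd : t < d) :
    digitCount p d (10 ^ (p - 1) + t) = 0 := by
  rw [digitCount, card_eq_zero, filter_eq_empty_iff]
  intro j hj
  obtain ⟨s, rfl⟩ : ∃ s, j = 10 ^ (p - 1) + s := ⟨j - 10 ^ (p - 1), by grind⟩
  have hst : s ≤ t := by simpa using hj
  by_cases hs : s < 10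
  · rw [pthDigit_pow_add hp hs]; omega
  · have : pthDigit p (10 ^ (p - 1) + s) < 10 := Nat.mod_lt _ (by norm_num)
    omega

lemma digitCount_pow_add_self_pos {p t : ℕ} (hp : 2 ≤ p) (ht : t < 10) :
    0 < digitCount p t (10 ^ (p - 1) + t) :=
  card_pos.mpr
    ⟨_, mem_filter.mpr ⟨right_mem_Icc.mpr (Nat.le_add_right _ _), pthDigit_pow_add hp ht⟩⟩

lemma Pdig_lt_Pdig {p a b n : ℕ} (hle : ∀ i, digitCount p b i ≤ digitCount p a i)
    (hlt : ∃ i ∈ Icc (10 ^ (p - 1)) n, digitCount p b i < digitCount p a i) :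
    Pdig p b n < Pdig p a n := by
  have hden {i : ℕ} (hi : i ∈ Icc (10 ^ (p - 1)) n) : (0 : ℝ) < i + 1 - 10 ^ (p - 1) := by
    have : ((10 ^ (p - 1) : ℕ) : ℝ) ≤ i := by exact_mod_cast (mem_Icc.mp hi).1
    push_cast at this; linarith
  obtain ⟨i₀, hi₀, hlt₀⟩ := hlt
  have hn : n ∈ Icc (10 ^ (p - 1)) n :=
    right_mem_Icc.mpr ((mem_Icc.mp hi₀).1.trans (mem_Icc.mp hi₀).2)
  refine mul_lt_mul_of_pos_left (sum_lt_sum (fun i hi => ?_) ?_) (one_div_pos.mpr (hden hn))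
  · gcongr
    · exact (hden hi).le
    · exact_mod_cast hle i
  · exact ⟨i₀, hi₀, by gcongr; exact hden hi₀⟩

theorem stmt5 (p : ℕ) (hp : 2 ≤ p) :
    ∀ n, 10 ^ (p - 1) + 9 ≤ n → ∀ a b : ℕ, a ≤ 9 → b ≤ 9 → a < b →
      Pdig p b n < Pdig p a n := by
  intro n hn a b ha hb hab
  refine Pdig_lt_Pdig (digitCount_le_digitCount hp hab.le) ⟨10 ^ (p - 1) + a, ?_, ?_⟩
  · exact mem_Icc.mpr ⟨Nat.le_add_right _ _, by omega⟩
  · rw [digitCount_pow_add_eq_zero hp hab]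
    exact digitCount_pow_add_self_pos hp (by omega)
end
end

section
/- Let $p \ge 2$ and $d \in \{0,\dots,9\}$. The sequence $(P_{(d,n,p)})_{n \ge 10^{p-1}}$ does not converge. -/
open Finset Real Filter

noncomputable section

/-!
Write `B = 10^(p-1)` and `a i = digitCount p d i / (i + 1 - B)`, so that `Pdig p d n` is the
average of `a` over `[B, n]`. If these averages converged to `L`, the sum of `a` over any block
`(n, n + T]` with `n + T ≤ K T` would be `T L + o(T)`.

Take `M = 10^(p-1) + d` and `T = 10^q`. The numbers in `[M T, (M+1) T)` have `p`-th digit `d`,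
those in `[(M+1) T, (M+10) T)` do not; so on the second range `digitCount` is a constant `C ≥ T`
and `a i = C / (i + 1 - B)` drops by a fixed factor across it. The sums of `a` over
`((M+1) T, (M+2) T]` and `((M+8) T, (M+9) T]` then differ by at least `5 T / ((M+2)(M+7))`.
-/

open Topology

theorem Finset.Icc_union_Ioc_eq_Icc {α : Type*} [LinearOrder α] [LocallyFiniteOrder α]
    {a b c : α} (h₁ : a ≤ b) (h₂ : b ≤ c) : Icc a b ∪ Ioc b c = Icc a c := by
  rw [← coe_inj, coe_union, coe_Icc, coe_Ioc, coe_Icc, Set.Icc_union_Ioc_eq_Icc h₁ h₂]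

theorem Finset.disjoint_Icc_Ioc {α : Type*} [Preorder α] [LocallyFiniteOrder α] (a b c : α) :
    Disjoint (Icc a b) (Ioc b c) :=
  disjoint_left.2 fun _ hx hx' => (mem_Ioc.1 hx').1.not_ge (mem_Icc.1 hx).2

theorem eventually_abs_sum_Ioc_sub_le {a : ℕ → ℝ} {B : ℕ} {L : ℝ}
    (h : Tendsto (fun n : ℕ => 1 / ((n : ℝ) + 1 - B) * ∑ i ∈ Icc B n, a i) atTop (𝓝 L))
    {ε : ℝ} (hε : 0 < ε) :
    ∀ᶠ n in atTop, ∀ m, n ≤ m → |∑ i ∈ Ioc n m, a i - (m - n) * L| ≤ ε * (n + m + 2) := by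
  obtain ⟨N, hN⟩ := Metric.tendsto_atTop.1 h ε hε
  have hS : ∀ k, max N B ≤ k → |∑ i ∈ Icc B k, a i - (k + 1 - B) * L| ≤ ε * (k + 1) := by
    intro k hk
    have hw : (0 : ℝ) < k + 1 - B := by
      have : (B : ℝ) ≤ k := by exact_mod_cast le_of_max_le_right hk
      linarith
    have hP := (hN k (le_of_max_le_left hk)).le
    rw [Real.dist_eq] at hP
    calc |∑ i ∈ Icc B k, a i - (k + 1 - B) * L|
        = |(k + 1 - B) * (1 / ((k : ℝ) + 1 - B) * ∑ i ∈ Icc B k, a i - L)| := by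
          congr 1
          field_simp
      _ = (k + 1 - B) * |1 / ((k : ℝ) + 1 - B) * ∑ i ∈ Icc B k, a i - L| := by
          rw [abs_mul, abs_of_pos hw]
      _ ≤ (k + 1) * ε := by
          gcongr
          linarith [(B.cast_nonneg : (0 : ℝ) ≤ B)]
      _ = ε * (k + 1) := mul_comm _ _
  filter_upwards [eventually_ge_atTop (max N B)] with n hn m hnm
  have hsplit : ∑ i ∈ Icc B m, a i = ∑ i ∈ Icc B n, a i + ∑ i ∈ Ioc n m, a i := by
    rw [← Icc_union_Ioc_eq_Icc (le_of_max_le_right hn) hnm,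
      sum_union (disjoint_Icc_Ioc _ _ _)]
  have hm := hS m (hn.trans hnm)
  have hn' := hS n hn
  rw [abs_le] at hm hn' ⊢
  constructor <;> linarith

theorem not_tendsto_of_block_sum_gap {a : ℕ → ℝ} {B K : ℕ} {δ : ℝ} (hδ : 0 < δ)
    (hgap : ∀ N : ℕ, ∃ T n₁ n₂ : ℕ, N ≤ n₁ ∧ N ≤ n₂ ∧ 0 < T ∧ n₁ + T ≤ K * T ∧ n₂ + T ≤ K * T ∧
      δ * T ≤ ∑ i ∈ Ioc n₁ (n₁ + T), a i - ∑ i ∈ Ioc n₂ (n₂ + T), a i) (L : ℝ) :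
    ¬ Tendsto (fun n : ℕ => 1 / ((n : ℝ) + 1 - B) * ∑ i ∈ Icc B n, a i) atTop (𝓝 L) := by
  intro h
  have hε : 0 < δ / (16 * (K + 1)) := by positivity
  obtain ⟨N, hN⟩ := (eventually_abs_sum_Ioc_sub_le h hε).exists_forall_of_atTop
  obtain ⟨T, n₁, n₂, hN₁, hN₂, hT, hK₁, hK₂, hδT⟩ := hgap N
  have hblock : ∀ n, N ≤ n → n + T ≤ K * T →
      |∑ i ∈ Ioc n (n + T), a i - T * L| ≤ δ * T / 4 := by
    intro n hn hnK
    have hsize : ((n + (n + T) + 2 : ℕ) : ℝ) ≤ 4 * (K + 1) * T := by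
      have : n + (n + T) + 2 ≤ 4 * (K + 1) * T := by nlinarith
      exact_mod_cast this
    have := hN n hn (n + T) (by omega)
    push_cast at this hsize
    calc |∑ i ∈ Ioc n (n + T), a i - T * L|
        = |∑ i ∈ Ioc n (n + T), a i - (n + T - n) * L| := by ring_nf
      _ ≤ δ / (16 * (K + 1)) * (n + (n + T) + 2) := this
      _ ≤ δ / (16 * (K + 1)) * (4 * (K + 1) * T) := by gcongr
      _ = δ * T / 4 := by field_simp; ring
  have h₁ := abs_le.1 (hblock n₁ hN₁ hK₁)
  have h₂ := abs_le.1 (hblock n₂ hN₂ hK₂)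
  have : (0 : ℝ) < T := by exact_mod_cast hT
  linarith [mul_pos hδ this]

theorem pthDigit_eq_div_pow_mod {p q j : ℕ} (h₁ : 10 ^ (p - 1) ≤ j / 10 ^ q)
    (h₂ : j / 10 ^ q < 10 ^ p) : pthDigit p j = j / 10 ^ q % 10 := by
  have hp : 1 ≤ p := by
    by_contra! hp
    simp only [Nat.lt_one_iff.1 hp] at h₁ h₂
    omega
  have hlog : Nat.log 10 j = p - 1 + q := by
    apply Nat.log_eq_of_pow_le_of_lt_pow
    · rw [pow_add]
      exact (Nat.le_div_iff_mul_le (by positivity)).1 h₁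
    · rw [show p - 1 + q + 1 = p + q by omega, pow_add]
      exact (Nat.div_lt_iff_lt_mul (by positivity)).1 h₂
  rw [pthDigit, hlog, show p - 1 + q + 1 - p = q by omega]

section Window

variable {p d q M : ℕ}

theorem pthDigit_eq_iff_of_mem_Ico (hM₁ : 10 ^ (p - 1) ≤ M) (hM₂ : M + 10 ≤ 10 ^ p)
    (hMd : M % 10 = d) {j : ℕ} (hj : j ∈ Ico (M * 10 ^ q) ((M + 10) * 10 ^ q)) :
    pthDigit p j = d ↔ j < (M + 1) * 10 ^ q := by
  rw [mem_Ico, ← Nat.le_div_iff_mul_le (by positivity),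
    ← Nat.div_lt_iff_lt_mul (by positivity)] at hj
  rw [← Nat.div_lt_iff_lt_mul (by positivity),
    pthDigit_eq_div_pow_mod (q := q) (by omega) (by omega)]
  omega

theorem digitCount_eq_add_card_filter_Ioc {n m : ℕ} (h₁ : 10 ^ (p - 1) ≤ n) (h₂ : n ≤ m) :
    digitCount p d m = digitCount p d n + #{j ∈ Ioc n m | pthDigit p j = d} := by
  rw [digitCount, digitCount, ← Icc_union_Ioc_eq_Icc h₁ h₂, filter_union,
    card_union_of_disjoint (disjoint_filter_filter (disjoint_Icc_Ioc _ _ _))]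

theorem pow_le_digitCount (hM₁ : 10 ^ (p - 1) ≤ M) (hM₂ : M + 10 ≤ 10 ^ p)
    (hMd : M % 10 = d) : 10 ^ q ≤ digitCount p d ((M + 1) * 10 ^ q) := by
  have hsub : Ico (M * 10 ^ q) ((M + 1) * 10 ^ q) ⊆
      {j ∈ Icc (10 ^ (p - 1)) ((M + 1) * 10 ^ q) | pthDigit p j = d} := by
    intro j hj
    have hj' := mem_Ico.1 hj
    have hT : 1 ≤ 10 ^ q := Nat.one_le_pow _ _ (by norm_num)
    refine mem_filter.2 ⟨mem_Icc.2 ⟨?_, hj'.2.le⟩, ?_⟩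
    · nlinarith
    · exact (pthDigit_eq_iff_of_mem_Ico hM₁ hM₂ hMd
        (mem_Ico.2 ⟨hj'.1, hj'.2.trans_le (by gcongr; omega)⟩)).2 hj'.2
  have := card_le_card hsub
  rwa [Nat.card_Ico, ← Nat.sub_mul, Nat.add_sub_cancel_left, one_mul] at this

theorem digitCount_eq_of_mem_Ico (hM₁ : 10 ^ (p - 1) ≤ M) (hM₂ : M + 10 ≤ 10 ^ p)
    (hMd : M % 10 = d) {i : ℕ} (hi : i ∈ Ico ((M + 1) * 10 ^ q) ((M + 10) * 10 ^ q)) :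
    digitCount p d i = digitCount p d ((M + 1) * 10 ^ q) := by
  have hi' := mem_Ico.1 hi
  have hT : 1 ≤ 10 ^ q := Nat.one_le_pow _ _ (by norm_num)
  rw [digitCount_eq_add_card_filter_Ioc (by nlinarith) hi'.1, add_eq_left, card_eq_zero,
    filter_eq_empty_iff]
  intro j hj
  have hj' := mem_Ioc.1 hj
  rw [pthDigit_eq_iff_of_mem_Ico hM₁ hM₂ hMd (mem_Ico.2 ⟨by nlinarith, by omega⟩)]
  omega

theorem digitCount_block_sum_gap (hM₁ : 10 ^ (p - 1) ≤ M) (hM₂ : M + 10 ≤ 10 ^ p)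
    (hMd : M % 10 = d) (hq : p - 1 ≤ q) :
    5 / ((M + 2) * (M + 7)) * ((10 ^ q : ℕ) : ℝ) ≤
      ∑ i ∈ Ioc ((M + 1) * 10 ^ q) ((M + 1) * 10 ^ q + 10 ^ q),
          (digitCount p d i : ℝ) / ((i : ℝ) + 1 - 10 ^ (p - 1)) -
        ∑ i ∈ Ioc ((M + 8) * 10 ^ q) ((M + 8) * 10 ^ q + 10 ^ q),
          (digitCount p d i : ℝ) / ((i : ℝ) + 1 - 10 ^ (p - 1)) := by
  set T := 10 ^ q with hT
  set C := digitCount p d ((M + 1) * T)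
  have hCT : (T : ℝ) ≤ C := by exact_mod_cast pow_le_digitCount hM₁ hM₂ hMd
  have hT1 : (1 : ℝ) ≤ T := by exact_mod_cast Nat.one_le_pow _ _ (by norm_num)
  have hB1 : (1 : ℝ) ≤ 10 ^ (p - 1) := one_le_pow₀ (by norm_num)
  have hBT : (10 : ℝ) ^ (p - 1) ≤ T := by
    rw [hT, Nat.cast_pow, Nat.cast_ofNat]; exact pow_le_pow_right₀ (by norm_num) hq
  have hcount : ∀ i, (M + 1) * T < i → i ≤ (M + 9) * T → digitCount p d i = C := by
    intro i h₁ h₂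
    exact digitCount_eq_of_mem_Ico hM₁ hM₂ hMd (mem_Ico.2 ⟨h₁.le, by nlinarith⟩)
  have hcard : ∀ n, ((#(Ioc n (n + T)) : ℕ) : ℝ) = T := fun n => by simp
  have hlower : T * (C / ((M + 2) * T) : ℝ) ≤ ∑ i ∈ Ioc ((M + 1) * T) ((M + 1) * T + T),
      (digitCount p d i : ℝ) / ((i : ℝ) + 1 - 10 ^ (p - 1)) := by
    refine (le_of_eq ?_).trans (card_nsmul_le_sum _ _ (C / ((M + 2) * T) : ℝ) fun i hi => ?_)
    · rw [nsmul_eq_mul, hcard]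
    · obtain ⟨h₁, h₂⟩ := mem_Ioc.1 hi
      rw [hcount i h₁ (by nlinarith)]
      have h₁' : ((M + 1) * T : ℝ) + 1 ≤ i := by exact_mod_cast h₁
      have h₂' : (i : ℝ) ≤ (M + 1) * T + T := by exact_mod_cast h₂
      gcongr <;> nlinarith
  have hupper : ∑ i ∈ Ioc ((M + 8) * T) ((M + 8) * T + T),
      (digitCount p d i : ℝ) / ((i : ℝ) + 1 - 10 ^ (p - 1)) ≤ T * (C / ((M + 7) * T) : ℝ) := by
    refine (sum_le_card_nsmul _ _ (C / ((M + 7) * T) : ℝ) fun i hi => ?_).trans (le_of_eq ?_)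
    · obtain ⟨h₁, h₂⟩ := mem_Ioc.1 hi
      rw [hcount i (by nlinarith) (by nlinarith)]
      have h₁' : ((M + 8) * T : ℝ) + 1 ≤ i := by exact_mod_cast h₁
      gcongr
      nlinarith
    · rw [nsmul_eq_mul, hcard]
  have hT0 : (T : ℝ) ≠ 0 := by positivity
  calc 5 / ((M + 2) * (M + 7)) * (T : ℝ)
      ≤ 5 / ((M + 2) * (M + 7)) * C := by gcongr
    _ = T * (C / ((M + 2) * T)) - T * (C / ((M + 7) * T)) := by field_simp; ring
    _ ≤ _ := by linarith

end Window

theorem stmt13 (p d : ℕ) (hp : 2 ≤ p) (hd : d ≤ 9) :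
    ¬ ∃ L : ℝ, Filter.Tendsto (fun n => Pdig p d n) Filter.atTop (nhds L) := by
  rintro ⟨L, hL⟩
  set M := 10 ^ (p - 1) + d
  have hten : 10 ∣ 10 ^ (p - 1) := dvd_pow_self 10 (by omega)
  have hM₂ : M + 10 ≤ 10 ^ p := by
    have : 10 ^ p = 10 * 10 ^ (p - 1) := by rw [← pow_succ']; congr 1; omega
    have : 0 < 10 ^ (p - 1) := by positivity
    omega
  have hMd : M % 10 = d := by omega
  refine not_tendsto_of_block_sum_gap (B := 10 ^ (p - 1)) (K := M + 9)
    (δ := 5 / ((M + 2) * (M + 7))) (by positivity)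
    (fun N => ?_) L (by simpa only [Pdig, Nat.cast_pow, Nat.cast_ofNat] using hL)
  have hN : N ≤ 10 ^ (N + p) := (Nat.lt_pow_self (by norm_num)).le.trans
    (Nat.pow_le_pow_right (by norm_num) (by omega))
  refine ⟨10 ^ (N + p), (M + 1) * 10 ^ (N + p), (M + 8) * 10 ^ (N + p), by nlinarith,
    by nlinarith, by positivity, by nlinarith, by nlinarith,
    digitCount_block_sum_gap (Nat.le_add_right _ _) hM₂ hMd (by omega)⟩
end
end
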